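/- Let (n_i)_{i≥1} be a sequence of positive integers with n_1 ≥ 2, define u_0 = ε and u_i = u_{i-1} a (u_{i-1} b)^{n_i} u_{i-1} over {a,b}, and let U = a_1 a_2 a_3 ⋯ be the infinite word having every u_i as a prefix. Set m_0 = 1 and m_j = n_j + 2 for j ≥ 1 (so that |u_j| + 1 = m_0 m_1 ⋯ m_j). Then for every i ≥ 1, a_i = a if and only if there exists j ≥ 0 such that i ≡ m_0 m_1 ⋯ m_j (mod m_0 m_1 ⋯ m_j m_{j+1}). -/

import Mathlib

open scoped BigOperators ENNReal

namespace PeriodicityComplexity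

variable {A : Type*}

/-- The finite word `z` occurs in the infinite word `w` at the (0-based) index `j`,
i.e. `z` occupies positions `j+1, …, j+|z|` of `w`. -/
def OccursAt (w : ℕ → A) (z : List A) (j : ℕ) : Prop :=
  z = List.ofFn (fun t : Fin z.length => w (j + t))

/-- `z` is a (finite) factor of the infinite word `w`. -/
def IsFactor (w : ℕ → A) (z : List A) : Prop := ∃ j, OccursAt w z j

/-- An infinite word is uniformly recurrent if every factor occurs with bounded gaps. -/
def UniformlyRecurrent (w : ℕ → A) : Prop :=
  ∀ z : List A, IsFactor w z → ∃ N : ℕ, ∀ j : ℕ, ∃ t, j ≤ t ∧ t < j + N ∧ OccursAt w z t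

/-- An infinite word is periodic if some `p ≥ 1` is a period of all of it. -/
def Periodic (w : ℕ → A) : Prop := ∃ p : ℕ, 1 ≤ p ∧ ∀ i, w (i + p) = w i

/-- An infinite word is ultimately periodic if some `p ≥ 1` is a period from some point on. -/
def UltimatelyPeriodic (w : ℕ → A) : Prop :=
  ∃ p : ℕ, 1 ≤ p ∧ ∃ N : ℕ, ∀ i, N ≤ i → w (i + p) = w i

/-- The `e`-fold concatenation `v^e` of a finite word `v`. -/
def wpow (v : List A) (e : ℕ) : List A := (List.replicate e v).flatten

/-- The prefix of length `i` of an infinite word. -/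
def wordPrefix (w : ℕ → A) (i : ℕ) : List A := List.ofFn (fun t : Fin i => w t)

/-- `r` is a repetition word at position `i` of the infinite word `w` (`w = uv`, `|u| = i`):
`r` is nonempty, suffix-comparable with `u`, and a prefix of the infinite remainder `v`. -/
def IsRepWordAt (w : ℕ → A) (i : ℕ) (r : List A) : Prop :=
  r ≠ [] ∧ (r <:+ wordPrefix w i ∨ wordPrefix w i <:+ r) ∧ OccursAt w r i

/-- Local period of an infinite word at position `i`, as an extended nonnegative real
(`⊤` if there is no repetition word at that position). -/
noncomputable def localPeriod (w : ℕ → A) (i : ℕ) : ℝ≥0∞ :=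
  sInf ((fun r : List A => (r.length : ℝ≥0∞)) '' {r | IsRepWordAt w i r})

/-- Periodicity complexity `h_w(i) = (1/i) ∑_{j=1}^{i} p_w(j)` of an infinite word. -/
noncomputable def pcomplexity (w : ℕ → A) (i : ℕ) : ℝ≥0∞ :=
  (∑ j ∈ Finset.Icc 1 i, localPeriod w j) / (i : ℝ≥0∞)

/-- `r` is a repetition word at position `i` of the finite word `v` (`v = xy`, `|x| = i`):
`r` is nonempty, suffix-comparable with `x` and prefix-comparable with `y`. -/
def IsRepWordAtF (v : List A) (i : ℕ) (r : List A) : Prop :=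
  r ≠ [] ∧ (r <:+ v.take i ∨ v.take i <:+ r) ∧ (r <+: v.drop i ∨ v.drop i <+: r)

/-- Local period of a finite word at position `i`. -/
noncomputable def localPeriodF (v : List A) (i : ℕ) : ℕ :=
  sInf {n : ℕ | ∃ r : List A, IsRepWordAtF v i r ∧ r.length = n}

/-- Average local period `h(v) = (1/|v|) ∑_{i=1}^{|v|} p_v(i)` of a finite word. -/
noncomputable def hF (v : List A) : ℝ :=
  (∑ i ∈ Finset.Icc 1 v.length, (localPeriodF v i : ℝ)) / (v.length : ℝ)

/-- An infinite word is of bounded repetition if the exponents of powers of nonempty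
words occurring in it are bounded. -/
def BoundedRepetition (w : ℕ → A) : Prop :=
  ∃ E : ℕ, ∀ (v : List A) (e : ℕ), v ≠ [] → IsFactor w (wpow v e) → e ≤ E

/-- `p` is a period of the finite word `z`. -/
def HasPeriodF (z : List A) (p : ℕ) : Prop :=
  ∀ t : ℕ, t + p < z.length → z[t]? = z[t + p]?

/-- The (least) period of a finite word. -/
noncomputable def periodF (z : List A) : ℕ := sInf {p : ℕ | 1 ≤ p ∧ HasPeriodF z p}

/-- `r` is a return word to `z` in the infinite word `w`: `r` is the factor of `w` between
two consecutive occurrences of `z`. -/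
def IsReturnWord (w : ℕ → A) (z r : List A) : Prop :=
  r ≠ [] ∧ ∃ j : ℕ, OccursAt w z j ∧ OccursAt w z (j + r.length) ∧
    (∀ t, j < t → t < j + r.length → ¬ OccursAt w z t) ∧ OccursAt w r j

/-- `l` is the length of some return word to `z` in `w`. -/
def IsReturnLength (w : ℕ → A) (z : List A) (l : ℕ) : Prop :=
  ∃ r : List A, IsReturnWord w z r ∧ r.length = l

/-- The maximal return time of `z` in `w`. -/
noncomputable def maxReturnTime (w : ℕ → A) (z : List A) : ℕ :=
  sSup {l : ℕ | IsReturnLength w z l}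

/-- A finite word is unbordered if no proper nonempty prefix of it is also a suffix. -/
def Unbordered (z : List A) : Prop :=
  ∀ b : List A, b ≠ [] → b.length < z.length → b <+: z → ¬ b <:+ z

/-- A finite word is primitive if it is not a (trivial or nontrivial) power of a word
other than itself. -/
def Primitive (z : List A) : Prop :=
  ∀ (v : List A) (k : ℕ), z = wpow v k → k = 1

/-- A finite word is Lyndon if it is primitive and lexicographically minimal among its
conjugates: `z ≤ yx` for every factorization `z = xy`. -/
def IsLyndon [LinearOrder A] (z : List A) : Prop :=
  Primitive z ∧ ∀ x y : List A, z = x ++ y → z ≤ y ++ x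

end PeriodicityComplexity

namespace PeriodicityComplexity

variable {A : Type*}

/-- The words `u_0 = ε`, `u_i = u_{i-1} a (u_{i-1} b)^{n_i} u_{i-1}` of the generalized
Toeplitz construction. -/
def uSeq (a b : A) (nseq : ℕ → ℕ) : ℕ → List A
  | 0 => []
  | i + 1 =>
      uSeq a b nseq i ++ [a] ++ wpow (uSeq a b nseq i ++ [b]) (nseq (i + 1)) ++ uSeq a b nseq i

end PeriodicityComplexity

open PeriodicityComplexity

/-!
Write `P_j = m_0 m_1 ⋯ m_j`, so that `|u_j| + 1 = P_j`. Since
`u_{J+1} b = (u_J a) (u_J b)^{n_{J+1}+1}`, a position `i < P_{J+1}` of `u_{J+1}` not divisible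
by `P_J` carries the letter at position `i mod P_J` of `u_J`, and the position `k P_J` carries
`a` exactly when `k = 1`. The congruence condition has the same two properties: below `P_{J+1}`
it can only be witnessed by `i = P_J` or by a level `j < J`, and the latter depends only on
`i mod P_J`. Hence the word defined by the condition has every `u_J` as a prefix, so it is `U`.
-/

namespace PeriodicityComplexity

section MixedRadix

def prodUpTo (m : ℕ → ℕ) (j : ℕ) : ℕ := ∏ t ∈ Finset.range (j + 1), m t

def IsAPosition (m : ℕ → ℕ) (i : ℕ) : Prop :=
  ∃ j, i ≡ prodUpTo m j [MOD prodUpTo m (j + 1)]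

variable {m : ℕ → ℕ}

theorem prodUpTo_succ (m : ℕ → ℕ) (j : ℕ) : prodUpTo m (j + 1) = prodUpTo m j * m (j + 1) :=
  Finset.prod_range_succ m (j + 1)

theorem prodUpTo_dvd_prodUpTo {i j : ℕ} (h : i ≤ j) : prodUpTo m i ∣ prodUpTo m j :=
  Finset.prod_dvd_prod_of_subset _ _ m (Finset.range_subset_range.2 (by omega))

variable (h0 : 0 < m 0) (hm : ∀ j, 1 < m (j + 1))
include h0 hm

theorem prodUpTo_pos (j : ℕ) : 0 < prodUpTo m j :=
  Finset.prod_pos fun t _ => by rcases t with _ | t; exacts [h0, Nat.zero_lt_of_lt (hm t)]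

theorem prodUpTo_strictMono : StrictMono (prodUpTo m) :=
  strictMono_nat_of_lt_succ fun j => by
    rw [prodUpTo_succ]
    exact lt_mul_of_one_lt_right (prodUpTo_pos h0 hm j) (hm j)

theorem isAPosition_iff_of_lt {i J : ℕ} (hi : i < prodUpTo m (J + 1)) :
    IsAPosition m i ↔ (∃ j < J, i ≡ prodUpTo m j [MOD prodUpTo m (j + 1)]) ∨ i = prodUpTo m J := by
  have hmono := prodUpTo_strictMono h0 hm
  constructor
  · rintro ⟨j, hj⟩
    rcases lt_or_ge j J with hjJ | hJj
    · exact .inl ⟨j, hjJ, hj⟩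
    · have hi' : i < prodUpTo m (j + 1) := hi.trans_le (hmono.monotone (by omega))
      have hij : i = prodUpTo m j := hj.eq_of_lt_of_lt hi' (hmono j.lt_succ_self)
      have hjlt : j < J + 1 := hmono.lt_iff_lt.1 (hij ▸ hi)
      exact .inr (by rwa [show j = J by omega] at hij)
  · rintro (⟨j, -, hj⟩ | rfl)
    exacts [⟨j, hj⟩, ⟨J, rfl⟩]

theorem isAPosition_congr_of_modEq {i i' J : ℕ} (h : i ≡ i' [MOD prodUpTo m J])
    (hi : i < prodUpTo m (J + 1)) (hi' : i' < prodUpTo m (J + 1))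
    (hne : i ≠ prodUpTo m J) (hne' : i' ≠ prodUpTo m J) :
    IsAPosition m i ↔ IsAPosition m i' := by
  rw [isAPosition_iff_of_lt h0 hm hi, isAPosition_iff_of_lt h0 hm hi', or_iff_left hne,
    or_iff_left hne']
  refine exists_congr fun j => and_congr_right fun hj => ?_
  have h' := h.of_dvd (prodUpTo_dvd_prodUpTo (m := m) (Nat.succ_le_of_lt hj))
  exact ⟨h'.symm.trans, h'.trans⟩

theorem isAPosition_mul_iff {k J : ℕ} (hk : k * prodUpTo m J < prodUpTo m (J + 1)) :
    IsAPosition m (k * prodUpTo m J) ↔ k = 1 := by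
  have hP := prodUpTo_pos h0 hm J
  rw [isAPosition_iff_of_lt h0 hm hk, Nat.mul_eq_right hP.ne']
  refine or_iff_right fun ⟨j, hj, hmod⟩ => ?_
  have hdvd : prodUpTo m (j + 1) ∣ k * prodUpTo m J :=
    (prodUpTo_dvd_prodUpTo (Nat.succ_le_of_lt hj)).mul_left k
  have hzero : prodUpTo m j ≡ 0 [MOD prodUpTo m (j + 1)] :=
    hmod.symm.trans (Nat.modEq_zero_iff_dvd.2 hdvd)
  exact (prodUpTo_pos h0 hm j).ne' (hzero.eq_of_lt_of_lt
    ((prodUpTo_strictMono h0 hm) j.lt_succ_self) (prodUpTo_pos h0 hm _))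

end MixedRadix

section Words

variable {A : Type*}

theorem wpow_succ' (v : List A) (e : ℕ) : wpow v (e + 1) = wpow v e ++ v := by
  simp [wpow, List.replicate_succ']

theorem length_wpow (v : List A) (e : ℕ) : (wpow v e).length = e * v.length := by
  simp [wpow]

theorem occursAt_iff {w : ℕ → A} {z : List A} {j : ℕ} :
    OccursAt w z j ↔ ∀ t (ht : t < z.length), z[t] = w (j + t) := by
  unfold OccursAt
  constructor
  · intro h t ht
    rw [List.getElem_of_eq h]
    simp
  · intro h
    exact List.ext_getElem (by simp) fun t h₁ _ => by simp [h t h₁]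

theorem occursAt_append {w : ℕ → A} {x y : List A} {j : ℕ} :
    OccursAt w (x ++ y) j ↔ OccursAt w x j ∧ OccursAt w y (j + x.length) := by
  simp only [occursAt_iff, List.length_append]
  constructor
  · intro h
    refine ⟨fun t ht => ?_, fun t ht => ?_⟩
    · simpa [List.getElem_append_left ht] using h t (by omega)
    · simpa [List.getElem_append_right, add_assoc] using h (x.length + t) (by omega)
  · rintro ⟨hx, hy⟩ t ht
    rw [List.getElem_append]
    split_ifs with htx
    · exact hx t htx
    · rw [hy (t - x.length) (by omega)]
      congr 1
      omega

theorem occursAt_singleton {w : ℕ → A} {c : A} {j : ℕ} : OccursAt w [c] j ↔ w j = c := by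
  simp [occursAt_iff, eq_comm]

theorem occursAt_wpow {w : ℕ → A} {v : List A} {e j : ℕ} :
    OccursAt w (wpow v e) j ↔ ∀ k < e, OccursAt w v (j + k * v.length) := by
  induction e with
  | zero => simp [wpow, occursAt_iff]
  | succ e ih => rw [wpow_succ', occursAt_append, ih, length_wpow, Nat.forall_lt_succ_right]

theorem OccursAt.shift {w : ℕ → A} {z : List A} {j j' : ℕ} (h : OccursAt w z j)
    (hw : ∀ t < z.length, w (j' + t) = w (j + t)) : OccursAt w z j' := by
  rw [occursAt_iff] at h ⊢
  exact fun t ht => (h t ht).trans (hw t ht).symm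

theorem eq_of_forall_occursAt_zero {U V : ℕ → A} {s : ℕ → List A}
    (hU : ∀ J, OccursAt U (s J) 0) (hV : ∀ J, OccursAt V (s J) 0)
    (hs : ∀ t, ∃ J, t < (s J).length) : U = V := by
  funext t
  obtain ⟨J, ht⟩ := hs t
  have hUt := occursAt_iff.1 (hU J) t ht
  have hVt := occursAt_iff.1 (hV J) t ht
  rw [zero_add] at hUt hVt
  exact hUt.symm.trans hVt

end Words

section Toeplitz

variable {A : Type*}

open Classical in
/-- Indexed from `0`, as in `OccursAt`: `toeplitzWord a b m t` is the letter `a_{t+1}`. -/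
noncomputable def toeplitzWord (a b : A) (m : ℕ → ℕ) (t : ℕ) : A :=
  if IsAPosition m (t + 1) then a else b

theorem toeplitzWord_eq_left_iff {a b : A} (hab : a ≠ b) (m : ℕ → ℕ) (t : ℕ) :
    toeplitzWord a b m t = a ↔ IsAPosition m (t + 1) := by
  unfold toeplitzWord
  split_ifs with h <;> simp [h, hab.symm]

variable {a b : A} {m : ℕ → ℕ} (h0 : 0 < m 0) (hm : ∀ j, 1 < m (j + 1))
include h0 hm

theorem toeplitzWord_mul_add_of_lt {J k t : ℕ} (hk : k < m (J + 1))
    (ht : t + 1 < prodUpTo m J) :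
    toeplitzWord a b m (k * prodUpTo m J + t) = toeplitzWord a b m t := by
  have hlt : k * prodUpTo m J + (t + 1) < prodUpTo m (J + 1) :=
    calc k * prodUpTo m J + (t + 1) < (k + 1) * prodUpTo m J := by linarith
      _ ≤ m (J + 1) * prodUpTo m J := Nat.mul_le_mul_right _ hk
      _ = prodUpTo m (J + 1) := by rw [prodUpTo_succ, mul_comm]
  have hne : k * prodUpTo m J + (t + 1) ≠ prodUpTo m J := by
    intro h
    rcases Nat.eq_zero_or_pos k with rfl | hk0 <;> nlinarith
  have hmod : k * prodUpTo m J + t + 1 ≡ t + 1 [MOD prodUpTo m J] := by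
    rw [add_assoc]
    exact Nat.mul_add_mod' _ _ _
  have hiff := isAPosition_congr_of_modEq h0 hm hmod (by omega) (by omega) (by omega) ht.ne
  classical
  exact if_congr hiff rfl rfl

theorem toeplitzWord_mul_add_pred {J k L : ℕ} (hL : L + 1 = prodUpTo m J)
    (hk : k + 1 < m (J + 1)) :
    toeplitzWord a b m (k * prodUpTo m J + L) = if k = 0 then a else b := by
  have hlt : (k + 1) * prodUpTo m J < prodUpTo m (J + 1) := by
    rw [prodUpTo_succ, mul_comm (k + 1)]
    exact Nat.mul_lt_mul_of_pos_left hk (prodUpTo_pos h0 hm J)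
  have hiff := isAPosition_mul_iff h0 hm hlt
  rw [show (k + 1) * prodUpTo m J = k * prodUpTo m J + L + 1 by rw [← hL]; ring] at hiff
  simp only [toeplitzWord, hiff, Nat.add_eq_right]

end Toeplitz

section Construction

variable {A : Type*} (a b : A)

theorem le_length_uSeq (nseq : ℕ → ℕ) (J : ℕ) : J ≤ (uSeq a b nseq J).length := by
  induction J with
  | zero => simp
  | succ J ih => simp only [uSeq, List.length_append, List.length_singleton]; omega

variable {nseq m : ℕ → ℕ} (hm0 : m 0 = 1) (hm : ∀ j, m (j + 1) = nseq (j + 1) + 2)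
include hm0 hm

theorem length_uSeq_add_one (J : ℕ) : (uSeq a b nseq J).length + 1 = prodUpTo m J := by
  induction J with
  | zero => simp [uSeq, prodUpTo, hm0]
  | succ J ih =>
    simp only [uSeq, List.length_append, List.length_singleton, length_wpow, prodUpTo_succ,
      ← ih, hm]
    ring

theorem occursAt_toeplitzWord_uSeq (J : ℕ) :
    OccursAt (toeplitzWord a b m) (uSeq a b nseq J) 0 := by
  have h0 : 0 < m 0 := by omega
  have hm' : ∀ j, 1 < m (j + 1) := fun j => by rw [hm]; omega
  induction J with
  | zero => simp [uSeq, occursAt_iff]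
  | succ J ih =>
    have hP := length_uSeq_add_one a b hm0 hm J
    have hmJ := hm J
    have hblock : ∀ k, 0 + prodUpTo m J + k * prodUpTo m J = (k + 1) * prodUpTo m J :=
      fun k => by ring
    have hlast : 0 + (prodUpTo m J + nseq (J + 1) * prodUpTo m J) =
        (nseq (J + 1) + 1) * prodUpTo m J := by ring
    have hu : ∀ k < m (J + 1), OccursAt (toeplitzWord a b m) (uSeq a b nseq J)
        (k * prodUpTo m J) := fun k hk =>
      ih.shift fun t ht => by
        rw [zero_add]
        exact toeplitzWord_mul_add_of_lt h0 hm' hk (by omega)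
    simp only [uSeq, occursAt_append, occursAt_wpow, occursAt_singleton, List.length_append,
      List.length_singleton, length_wpow, hP, hblock, hlast]
    refine ⟨⟨⟨ih, ?_⟩, fun k hk => ⟨hu (k + 1) (by omega), ?_⟩⟩, hu (nseq (J + 1) + 1) (by omega)⟩
    · simpa using toeplitzWord_mul_add_pred h0 hm' (k := 0) hP (by omega)
    · simpa using toeplitzWord_mul_add_pred h0 hm' (k := k + 1) hP (by omega)

end Construction

end PeriodicityComplexity

theorem toeplitz_letter_formula_general
    {A : Type*} (a b : A) (hab : a ≠ b)
    (nseq : ℕ → ℕ)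
    (U : ℕ → A) (hU : ∀ i : ℕ, OccursAt U (uSeq a b nseq i) 0)
    (m : ℕ → ℕ) (hm0 : m 0 = 1) (hm : ∀ j, 1 ≤ j → m j = nseq j + 2) :
    ∀ i : ℕ, 1 ≤ i →
      (U (i - 1) = a ↔
        ∃ j : ℕ, i ≡ (∏ t ∈ Finset.range (j + 1), m t) [MOD (∏ t ∈ Finset.range (j + 2), m t)]) := by
  have hU_eq : U = toeplitzWord a b m :=
    eq_of_forall_occursAt_zero hU
      (occursAt_toeplitzWord_uSeq a b hm0 fun j => hm (j + 1) j.succ_pos)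
      fun t => ⟨t + 1, le_length_uSeq a b nseq (t + 1)⟩
  intro i hi
  obtain ⟨t, rfl⟩ := Nat.exists_eq_add_of_le' hi
  rw [hU_eq, Nat.add_sub_cancel]
  exact toeplitzWord_eq_left_iff hab m t

/-- In the generalized Toeplitz construction, with `m_0 = 1` and
`m_j = n_j + 2` for `j ≥ 1`, the `i`-th letter of `U` (for `i ≥ 1`) equals `a` if and only
if `i ≡ m_0 m_1 ⋯ m_j (mod m_0 m_1 ⋯ m_j m_{j+1})` for some `j ≥ 0`. -/
theorem toeplitz_letter_formula
    {A : Type*} (a b : A) (hab : a ≠ b)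
    (nseq : ℕ → ℕ) (hpos : ∀ i, 1 ≤ i → 1 ≤ nseq i) (hn1 : 2 ≤ nseq 1)
    (U : ℕ → A) (hU : ∀ i : ℕ, OccursAt U (uSeq a b nseq i) 0)
    (m : ℕ → ℕ) (hm0 : m 0 = 1) (hm : ∀ j, 1 ≤ j → m j = nseq j + 2) :
    ∀ i : ℕ, 1 ≤ i →
      (U (i - 1) = a ↔
        ∃ j : ℕ, i ≡ (∏ t ∈ Finset.range (j + 1), m t) [MOD (∏ t ∈ Finset.range (j + 2), m t)]) :=
  toeplitz_letter_formula_general a b hab nseq U hU m hm0 hm
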